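/- Fix keys k_j, values v_j and a query q with unregularized local linear statistics (λ = 0) and Σ invertible. If q = k_l for some index l and the local linear interpolation is exact in the sense that there exist W, b with v_j = b + W(k_j - q) for all j with w_j > 0, then the LLA prediction b̂ = Σ_j s_j v_j equals v_l. -/
import Mathlib


open scoped BigOperators
open Matrix

lemma vecMulVec_mulVec' {d : ℕ} (a b ρ : Fin d → ℝ) :
    (vecMulVec a b) *ᵥ ρ = (b ⬝ᵥ ρ) • a := by
  funext x
  simp only [vecMulVec, Matrix.mulVec, dotProduct, Matrix.of_apply, Pi.smul_apply, smul_eq_mul,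
    Finset.sum_mul]
  exact Finset.sum_congr rfl fun y _ => by ring

lemma sum_mulVec' {d i : ℕ} (A : Fin i → Matrix (Fin d) (Fin d) ℝ) (ρ : Fin d → ℝ) :
    (∑ j, A j) *ᵥ ρ = ∑ j, A j *ᵥ ρ := by
  funext x
  simp only [Matrix.mulVec, dotProduct, Finset.sum_apply, Matrix.sum_apply, Finset.sum_mul]
  exact Finset.sum_comm

lemma mulVec_sum' {d i : ℕ} (W : Matrix (Fin d) (Fin d) ℝ) (u : Fin i → Fin d → ℝ) :
    W *ᵥ (∑ j, u j) = ∑ j, W *ᵥ u j := by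
  funext x
  simp only [Matrix.mulVec, dotProduct, Finset.sum_apply, Finset.mul_sum]
  exact Finset.sum_comm

lemma sum_dotProduct' {d i : ℕ} (u : Fin i → Fin d → ℝ) (ρ : Fin d → ℝ) :
    (∑ j, u j) ⬝ᵥ ρ = ∑ j, u j ⬝ᵥ ρ := by
  simp only [dotProduct, Finset.sum_apply, Finset.sum_mul]
  exact Finset.sum_comm

/-- Exact associative recall of LLA under locally linear data: if the query
coincides with a stored key `k l` and the values are exactly locally linear in
the keys, then the unregularized LLA prediction retrieves the value `v l`. -/
theorem lla_exact_recall
    (d i : ℕ) (q : Fin d → ℝ) (k v : Fin i → Fin d → ℝ)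
    (w : Fin i → ℝ) (hw : ∀ j, 0 < w j)
    (z : Fin i → Fin d → ℝ) (hz : ∀ j, z j = k j - q)
    (ω : ℝ) (hω : ω = ∑ j, w j)
    (μ : Fin d → ℝ) (hμ : μ = ∑ j, w j • z j)
    (Sig : Matrix (Fin d) (Fin d) ℝ)
    (hSig : Sig = ∑ j, w j • vecMulVec (z j) (z j))
    (hinv : IsUnit Sig)
    (ρ : Fin d → ℝ) (hρ : ρ = Sig⁻¹ *ᵥ μ)
    (hden : ω - μ ⬝ᵥ ρ ≠ 0)
    (s : Fin i → ℝ) (hs : ∀ j, s j = w j * (1 - z j ⬝ᵥ ρ) / (ω - μ ⬝ᵥ ρ))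
    (l : Fin i) (hq : q = k l)
    (W : Matrix (Fin d) (Fin d) ℝ) (b : Fin d → ℝ)
    (hfit : ∀ j, 0 < w j → v j = b + W *ᵥ (k j - q)) :
    ∑ j, s j • v j = v l := by
  have hdet : IsUnit Sig.det := (Matrix.isUnit_iff_isUnit_det Sig).mp hinv
  -- Sig *ᵥ ρ = μ
  have hSigρ : Sig *ᵥ ρ = μ := by
    rw [hρ, Matrix.mulVec_mulVec, Matrix.mul_nonsing_inv Sig hdet, Matrix.one_mulVec]
  -- sum of weights equals 1
  have hsum1 : ∑ j, s j = 1 := by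
    have hdot : ∑ j, w j * (z j ⬝ᵥ ρ) = μ ⬝ᵥ ρ := by
      rw [hμ, sum_dotProduct']
      exact Finset.sum_congr rfl fun j _ => by
        rw [smul_dotProduct, smul_eq_mul]
    calc ∑ j, s j = (∑ j, w j * (1 - z j ⬝ᵥ ρ)) / (ω - μ ⬝ᵥ ρ) := by
          rw [Finset.sum_div]; exact Finset.sum_congr rfl fun j _ => hs j
      _ = 1 := by
          have h1 : ∑ j, w j * (1 - z j ⬝ᵥ ρ) = ω - μ ⬝ᵥ ρ := by
            simp only [mul_sub, mul_one, Finset.sum_sub_distrib, hdot, ← hω]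
          rw [h1, div_self hden]
  -- weighted sum of z vanishes
  have hsumz : ∑ j, s j • z j = 0 := by
    have hSz : ∑ j, (w j * (z j ⬝ᵥ ρ)) • z j = μ := by
      have h2 : Sig *ᵥ ρ = ∑ j, (w j * (z j ⬝ᵥ ρ)) • z j := by
        rw [hSig, sum_mulVec']
        refine Finset.sum_congr rfl fun j _ => ?_
        rw [Matrix.smul_mulVec, vecMulVec_mulVec', smul_smul]
      rw [← h2, hSigρ]
    have expand : ∑ j, s j • z j
        = (ω - μ ⬝ᵥ ρ)⁻¹ • (∑ j, w j • z j - ∑ j, (w j * (z j ⬝ᵥ ρ)) • z j) := by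
      rw [smul_sub, Finset.smul_sum, Finset.smul_sum, ← Finset.sum_sub_distrib]
      refine Finset.sum_congr rfl fun j _ => ?_
      rw [smul_smul, smul_smul, ← sub_smul, hs j]
      congr 1
      field_simp
    rw [expand, ← hμ, hSz, sub_self, smul_zero]
  -- z l = 0
  have hzl : z l = 0 := by rw [hz, hq]; simp
  have hvl : v l = b := by
    rw [hfit l (hw l)]
    simp [hq]
  calc ∑ j, s j • v j = ∑ j, s j • (b + W *ᵥ z j) := by
        refine Finset.sum_congr rfl fun j _ => ?_
        rw [hfit j (hw j), hz j]
    _ = (∑ j, s j) • b + W *ᵥ (∑ j, s j • z j) := by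
        simp only [smul_add, Finset.sum_add_distrib]
        congr 1
        · rw [← Finset.sum_smul]
        · rw [mulVec_sum']
          exact Finset.sum_congr rfl fun j _ => (Matrix.mulVec_smul W (s j) (z j)).symm
    _ = v l := by rw [hsum1, hsumz, one_smul, Matrix.mulVec_zero, add_zero, hvl]
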